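/- The Petersen graph P has circular flow number F_c(P) = 5. -/

import Mathlib

structure Multigraph where
  V : Type
  E : Type
  [finV : Finite V]
  [finE : Finite E]
  fst : E → V
  snd : E → V

attribute [instance] Multigraph.finV Multigraph.finE

namespace Multigraph

/-- The degree of a vertex (loops count twice). -/
noncomputable def degree (G : Multigraph) (v : G.V) : ℕ :=
  Nat.card {e : G.E // G.fst e = v} + Nat.card {e : G.E // G.snd e = v}

def IsRegular (G : Multigraph) (k : ℕ) : Prop := ∀ v, G.degree v = k

/-- `φ` is a nowhere-zero `r`-flow: values have absolute value in `[1, r-1]`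
(the sign of `φ e` encodes the chosen orientation of `e`), and flow is conserved
at every vertex. -/
def IsNowhereZeroFlow (G : Multigraph) (r : ℝ) (φ : G.E → ℝ) : Prop :=
  (∀ e, 1 ≤ |φ e| ∧ |φ e| ≤ r - 1) ∧
  ∀ v : G.V, (∑ᶠ e ∈ {e : G.E | G.fst e = v}, φ e) = ∑ᶠ e ∈ {e : G.E | G.snd e = v}, φ e

def HasNowhereZeroFlow (G : Multigraph) (r : ℝ) : Prop := ∃ φ, G.IsNowhereZeroFlow r φ

/-- The circular flow number, `⊤` if `G` has no nowhere-zero flow. -/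
noncomputable def flowNumber (G : Multigraph) : EReal :=
  sInf {x : EReal | ∃ r : ℝ, x = (r : EReal) ∧ G.HasNowhereZeroFlow r}

def Bipartite (G : Multigraph) : Prop :=
  ∃ c : G.V → Bool, ∀ e, c (G.fst e) ≠ c (G.snd e)

def IsOneFactor (G : Multigraph) (F : Set G.E) : Prop :=
  (∀ e ∈ F, G.fst e ≠ G.snd e) ∧
  ∀ v : G.V, ∃! e : G.E, e ∈ F ∧ (G.fst e = v ∨ G.snd e = v)

/-- `G - F` is bipartite. -/
def BipartiteWithout (G : Multigraph) (F : Set G.E) : Prop :=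
  ∃ c : G.V → Bool, ∀ e ∉ F, c (G.fst e) ≠ c (G.snd e)

def IsProperEdgeColoring (G : Multigraph) {n : ℕ} (c : G.E → Fin n) : Prop :=
  ∀ e₁ e₂ : G.E, e₁ ≠ e₂ →
    (G.fst e₁ = G.fst e₂ ∨ G.fst e₁ = G.snd e₂ ∨ G.snd e₁ = G.fst e₂ ∨ G.snd e₁ = G.snd e₂) →
    c e₁ ≠ c e₂

noncomputable def edgeChromaticNumber (G : Multigraph) : ℕ :=
  sInf {n : ℕ | ∃ c : G.E → Fin n, G.IsProperEdgeColoring c}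

def edgeBoundary (G : Multigraph) (X : Set G.V) : Set G.E :=
  {e | (G.fst e ∈ X) ≠ (G.snd e ∈ X)}

def IsBalancedValuation (G : Multigraph) (w : G.V → ℝ) : Prop :=
  ∀ X : Set G.V, |∑ᶠ v ∈ X, w v| ≤ (G.edgeBoundary X).ncard

end Multigraph

/-- Vertices of the Petersen graph: 2-element subsets of a 5-element set. -/
abbrev PetersenVertex : Type := {s : Finset (Fin 5) // s.card = 2}

/-- The Petersen graph as the Kneser graph `K(5,2)`: two 2-subsets are adjacent
iff they are disjoint. -/
def petersen : SimpleGraph PetersenVertex where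
  Adj a b := Disjoint a.1 b.1
  symm := ⟨fun _ _ h => h.symm⟩
  loopless := ⟨by
    intro a h
    rw [disjoint_self] at h
    have := a.2
    simp [h] at this⟩

/-- The Petersen graph viewed as a multigraph; each edge `e` gets the two ends of
a (fixed) representative of the unordered pair `e`. -/
noncomputable def petersenMultigraph : Multigraph where
  V := PetersenVertex
  E := ↥petersen.edgeSet
  fst e := (Quot.out e.val).1
  snd e := (Quot.out e.val).2

/-!
A nowhere-zero 5-flow on the Petersen graph is exhibited and checked by computation.

Conversely, write a nowhere-zero `r`-flow as a skew-symmetric function `g` on ordered pairs of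
vertices. In a cubic graph every vertex has one or two outgoing edges, and as many edges go out as
come in, so exactly half of the vertices have two. In the Petersen graph, whichever 5 vertices
are chosen, some vertex has two neighbours on its own side (checked by exhaustion); as the graph
is triangle-free, this gives an induced path `u v w` whose vertices all have two outgoing edges,
after reversing `g` if necessary. Then four of the five edges leaving `{u, v, w}` point outwards
and one inwards. The net flow out of `{u, v, w}` vanishes, so the inward edge carries at least
`4`, i.e. `r - 1 ≥ 4`.
-/

open Finset

namespace SimpleGraph

variable {V : Type} (G : SimpleGraph V)

noncomputable abbrev toMultigraph [Finite V] : Multigraph where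
  V := V
  E := G.edgeSet
  fst e := (Quot.out e.val).1
  snd e := (Quot.out e.val).2

/-- A nowhere-zero `r`-flow recorded on ordered pairs of vertices: `g a b` is the net flow
from `a` to `b`. -/
structure IsNowhereZeroFlow [Fintype V] (r : ℝ) (g : V → V → ℝ) : Prop where
  skew (a b : V) : g b a = -g a b
  eq_zero_of_not_adj {a b : V} : ¬G.Adj a b → g a b = 0
  bounds {a b : V} : G.Adj a b → 1 ≤ |g a b| ∧ |g a b| ≤ r - 1
  sum_eq_zero (a : V) : ∑ b, g a b = 0

lemma toMultigraph_fst_snd [Finite V] (e : G.edgeSet) :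
    s(G.toMultigraph.fst e, G.toMultigraph.snd e) = e.val :=
  Quot.out_eq _

lemma toMultigraph_ends_eq_iff [Finite V] {e : G.edgeSet} {a b : V} :
    (G.toMultigraph.fst e = a ∧ G.toMultigraph.snd e = b) ∨
        (G.toMultigraph.fst e = b ∧ G.toMultigraph.snd e = a) ↔ e.val = s(a, b) := by
  rw [← toMultigraph_fst_snd, Sym2.eq_iff]

section pairFlow

variable [Fintype V] [DecidableEq V] [DecidableRel G.Adj]

/-- The flow `φ` on the oriented edges of `G.toMultigraph`, read on ordered pairs. -/
noncomputable def pairFlow (φ : G.edgeSet → ℝ) (a b : V) : ℝ :=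
  ∑ e : G.edgeSet, ((if G.toMultigraph.fst e = a ∧ G.toMultigraph.snd e = b then φ e else 0) -
    if G.toMultigraph.fst e = b ∧ G.toMultigraph.snd e = a then φ e else 0)

lemma pairFlow_swap (φ : G.edgeSet → ℝ) (a b : V) : G.pairFlow φ b a = -G.pairFlow φ a b := by
  simp only [pairFlow, ← sum_neg_distrib, neg_sub]

lemma sum_pairFlow (φ : G.edgeSet → ℝ) (a : V) :
    ∑ b, G.pairFlow φ a b =
      (∑ e, if G.toMultigraph.fst e = a then φ e else 0) -
        ∑ e, if G.toMultigraph.snd e = a then φ e else 0 := by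
  simp only [pairFlow]
  rw [sum_comm, ← sum_sub_distrib]
  refine sum_congr rfl fun e _ => ?_
  simp [sum_sub_distrib, ite_and, eq_comm]

lemma pairFlow_of_not_adj (φ : G.edgeSet → ℝ) {a b : V} (h : ¬G.Adj a b) :
    G.pairFlow φ a b = 0 := by
  refine sum_eq_zero fun e _ => ?_
  have hab := mt G.toMultigraph_ends_eq_iff.mp fun he => h <| by
    rw [← mem_edgeSet, ← he]; exact e.prop
  rw [not_or] at hab
  rw [if_neg hab.1, if_neg hab.2, sub_zero]

lemma pairFlow_of_adj (φ : G.edgeSet → ℝ) {a b : V} (h : G.Adj a b) :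
    G.pairFlow φ a b =
      if G.toMultigraph.fst ⟨s(a, b), h⟩ = a then φ ⟨s(a, b), h⟩ else -φ ⟨s(a, b), h⟩ := by
  set e₀ : G.edgeSet := ⟨s(a, b), h⟩
  have hends : _ ∨ _ := G.toMultigraph_ends_eq_iff.mpr (rfl : e₀.val = s(a, b))
  rw [pairFlow, sum_eq_single e₀]
  · by_cases ha : G.toMultigraph.fst e₀ = a
    · have hb : ¬G.toMultigraph.fst e₀ = b := ha ▸ h.ne
      simp_all
    · simp_all
  · intro e _ he
    have hab := mt G.toMultigraph_ends_eq_iff.mp fun he' => he (Subtype.ext he')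
    rw [not_or] at hab
    rw [if_neg hab.1, if_neg hab.2, sub_zero]
  · simp

lemma pairFlow_ends {g : V → V → ℝ} (hskew : ∀ a b, g b a = -g a b)
    (hzero : ∀ {a b}, ¬G.Adj a b → g a b = 0) (a b : V) :
    G.pairFlow (fun e => g (G.toMultigraph.fst e) (G.toMultigraph.snd e)) a b = g a b := by
  by_cases h : G.Adj a b
  · rw [pairFlow_of_adj _ _ h]
    rcases (G.toMultigraph_ends_eq_iff (e := ⟨s(a, b), h⟩)).mpr rfl with ⟨ha, hb⟩ | ⟨ha, hb⟩
    · rw [if_pos ha, ha, hb]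
    · rw [if_neg (by rw [ha]; exact h.ne.symm), ha, hb, hskew, neg_neg]
  · rw [pairFlow_of_not_adj _ _ h, hzero h]

end pairFlow

theorem hasNowhereZeroFlow_toMultigraph_iff [Fintype V] {r : ℝ} :
    G.toMultigraph.HasNowhereZeroFlow r ↔ ∃ g, G.IsNowhereZeroFlow r g := by
  classical
  have hcons (φ : G.edgeSet → ℝ) :
      (∀ v, ∑ᶠ e ∈ {e | G.toMultigraph.fst e = v}, φ e =
          ∑ᶠ e ∈ {e | G.toMultigraph.snd e = v}, φ e) ↔ ∀ a, ∑ b, G.pairFlow φ a b = 0 := by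
    simp only [sum_pairFlow, sub_eq_zero, finsum_mem_eq_toFinset_sum, Set.toFinset_ofPred,
      sum_filter]
  constructor
  · rintro ⟨φ, hbounds, hφ⟩
    refine ⟨G.pairFlow φ,
      ⟨G.pairFlow_swap φ, G.pairFlow_of_not_adj φ, fun h => ?_, (hcons φ).mp hφ⟩⟩
    rw [G.pairFlow_of_adj φ h]
    split_ifs
    · exact hbounds _
    · rw [abs_neg]; exact hbounds _
  · rintro ⟨g, hg⟩
    refine ⟨fun e => g (G.toMultigraph.fst e) (G.toMultigraph.snd e), fun e => hg.bounds ?_, ?_⟩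
    · rw [← mem_edgeSet, toMultigraph_fst_snd]; exact e.prop
    · rw [hcons]
      simpa only [G.pairFlow_ends hg.skew hg.eq_zero_of_not_adj] using hg.sum_eq_zero

namespace IsNowhereZeroFlow

variable {G} [Fintype V] {r : ℝ} {g : V → V → ℝ} {a b : V}

lemma neg (hg : G.IsNowhereZeroFlow r g) : G.IsNowhereZeroFlow r (-g) where
  skew a b := by simp [hg.skew a b]
  eq_zero_of_not_adj h := by simp [hg.eq_zero_of_not_adj h]
  bounds h := by simpa using hg.bounds h
  sum_eq_zero a := by simp [hg.sum_eq_zero a]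

lemma adj_of_ne_zero (hg : G.IsNowhereZeroFlow r g) (h : g a b ≠ 0) : G.Adj a b :=
  not_imp_comm.mp hg.eq_zero_of_not_adj h

lemma ne_zero_of_adj (hg : G.IsNowhereZeroFlow r g) (h : G.Adj a b) : g a b ≠ 0 := fun h0 =>
  (hg.bounds h).1.not_gt (by simp [h0])

lemma one_le_of_pos (hg : G.IsNowhereZeroFlow r g) (h : 0 < g a b) : 1 ≤ g a b := by
  simpa [abs_of_pos h] using (hg.bounds (hg.adj_of_ne_zero h.ne')).1

lemma one_sub_le_of_neg (hg : G.IsNowhereZeroFlow r g) (h : g a b < 0) : 1 - r ≤ g a b := by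
  have := (hg.bounds (hg.adj_of_ne_zero h.ne)).2
  rw [abs_of_neg h] at this
  linarith

lemma card_pos_add_card_neg [DecidableEq V] [DecidableRel G.Adj] (hg : G.IsNowhereZeroFlow r g)
    (a : V) (Y : Finset V) :
    #{b ∈ Y | 0 < g a b} + #{b ∈ Y | g a b < 0} = #{b ∈ Y | G.Adj a b} := by
  rw [← card_union_of_disjoint (disjoint_filter.2 fun b _ h => h.not_gt), ← filter_or]
  congr 1
  refine filter_congr fun b _ => ⟨fun h => hg.adj_of_ne_zero ?_, fun h => ?_⟩
  · rcases h with h | h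
    exacts [h.ne', h.ne]
  · exact (hg.ne_zero_of_adj h).lt_or_gt.symm

lemma card_pos_add_card_neg_eq_degree [DecidableEq V] [DecidableRel G.Adj]
    (hg : G.IsNowhereZeroFlow r g) (a : V) : #{b | 0 < g a b} + #{b | g a b < 0} = G.degree a := by
  rw [hg.card_pos_add_card_neg a univ, ← card_neighborFinset_eq_degree, neighborFinset_eq_filter]

lemma card_pos_pos [DecidableRel G.Adj] (hg : G.IsNowhereZeroFlow r g) (ha : 0 < G.degree a) :
    0 < #{b | 0 < g a b} := by
  obtain ⟨b, hab⟩ := (G.degree_pos_iff_exists_adj a).mp ha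
  by_contra! h
  have hnonpos : ∀ c ∈ univ, g a c ≤ 0 := fun c _ => not_lt.mp fun hc =>
    (card_pos.mpr ⟨c, by simp [hc]⟩).ne' (Nat.le_zero.mp h)
  exact hg.ne_zero_of_adj hab
    ((sum_eq_zero_iff_of_nonpos hnonpos).mp (hg.sum_eq_zero a) b (mem_univ b))

lemma sum_card_pos_eq_sum_card_neg (hg : G.IsNowhereZeroFlow r g) (X : Finset V) :
    ∑ a ∈ X, #{b ∈ X | 0 < g a b} = ∑ a ∈ X, #{b ∈ X | g a b < 0} := by
  simp only [card_filter]
  rw [sum_comm]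
  refine sum_congr rfl fun a _ => sum_congr rfl fun b _ => ?_
  rw [hg.skew]
  simp only [neg_pos]

lemma sum_sum_compl_eq_zero [DecidableEq V] (hg : G.IsNowhereZeroFlow r g) (X : Finset V) :
    ∑ a ∈ X, ∑ b ∈ Xᶜ, g a b = 0 := by
  have hinner : ∑ a ∈ X, ∑ b ∈ X, g a b = 0 := by
    have hswap : ∑ a ∈ X, ∑ b ∈ X, g a b = -∑ a ∈ X, ∑ b ∈ X, g a b := by
      conv_lhs => rw [sum_comm]
      simp only [← sum_neg_distrib]
      exact sum_congr rfl fun a _ => sum_congr rfl fun b _ => hg.skew a b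
    linarith
  calc ∑ a ∈ X, ∑ b ∈ Xᶜ, g a b = ∑ a ∈ X, ∑ b, g a b - ∑ a ∈ X, ∑ b ∈ X, g a b := by
        simp only [← sum_add_sum_compl X (g _), sum_add_distrib, add_sub_cancel_left]
    _ = 0 := by simp [hg.sum_eq_zero, hinner]

lemma card_cut_pos_le [DecidableEq V] (hg : G.IsNowhereZeroFlow r g) (X : Finset V) :
    ((∑ a ∈ X, #{b ∈ Xᶜ | 0 < g a b} : ℕ) : ℝ) ≤
      (r - 1) * ((∑ a ∈ X, #{b ∈ Xᶜ | g a b < 0} : ℕ) : ℝ) := by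
  have hterm (a b : V) :
      ((if 0 < g a b then 1 else 0) - (r - 1) * if g a b < 0 then 1 else 0) ≤ g a b := by
    rcases lt_trichotomy (g a b) 0 with h | h | h
    · simp [h, h.not_gt, hg.one_sub_le_of_neg h]
    · simp [h]
    · simp [h, h.not_gt, hg.one_le_of_pos h]
  have := sum_le_sum fun a (_ : a ∈ X) => sum_le_sum fun b (_ : b ∈ Xᶜ) => hterm a b
  simp only [sum_sub_distrib, ← mul_sum, ← natCast_card_filter, hg.sum_sum_compl_eq_zero] at this
  push_cast
  linarith

section Cubic

variable [DecidableEq V] [DecidableRel G.Adj]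

lemma card_pos_add_card_neg_eq_three (hG : G.IsRegularOfDegree 3) (hg : G.IsNowhereZeroFlow r g)
    (a : V) : #{b | 0 < g a b} + #{b | g a b < 0} = 3 := by
  rw [hg.card_pos_add_card_neg_eq_degree, hG.degree_eq]

lemma card_pos_eq_one_or_two (hG : G.IsRegularOfDegree 3) (hg : G.IsNowhereZeroFlow r g)
    (a : V) : #{b | 0 < g a b} = 1 ∨ #{b | 0 < g a b} = 2 := by
  have hdeg : 0 < G.degree a := by rw [hG.degree_eq]; norm_num
  have hout := hg.card_pos_pos hdeg
  have hin := hg.neg.card_pos_pos hdeg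
  simp only [Pi.neg_apply, neg_pos] at hin
  have := hg.card_pos_add_card_neg_eq_three hG a
  omega

lemma two_mul_card_eq_card (hG : G.IsRegularOfDegree 3) (hg : G.IsNowhereZeroFlow r g) :
    2 * #{a | #{b | 0 < g a b} = 2} = Fintype.card V := by
  have hbalance := hg.sum_card_pos_eq_sum_card_neg univ
  have htotal : ∑ a, (#{b | 0 < g a b} + #{b | g a b < 0}) = 3 * Fintype.card V := by
    simp [hg.card_pos_add_card_neg_eq_three hG, mul_comm]
  have hsplit : ∑ a, #{b | 0 < g a b} = Fintype.card V + #{a | #{b | 0 < g a b} = 2} := by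
    rw [card_filter, ← card_univ, card_eq_sum_ones, ← sum_add_distrib]
    refine sum_congr rfl fun a _ => ?_
    rcases hg.card_pos_eq_one_or_two hG a with h | h <;> simp [h]
  rw [sum_add_distrib] at htotal
  omega

lemma card_pos_neg_eq_two_of_ne (hG : G.IsRegularOfDegree 3) (hg : G.IsNowhereZeroFlow r g)
    (ha : #{b | 0 < g a b} ≠ 2) : #{b | 0 < (-g) a b} = 2 := by
  simp only [Pi.neg_apply, neg_pos]
  have := hg.card_pos_add_card_neg_eq_three hG a
  have := hg.card_pos_eq_one_or_two hG a
  omega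

lemma five_le_of_induced_path (hG : G.IsRegularOfDegree 3) (hg : G.IsNowhereZeroFlow r g)
    {u v w : V} (hvu : G.Adj v u) (hvw : G.Adj v w) (huw : u ≠ w) (hnuw : ¬G.Adj u w)
    (hout : ∀ a ∈ ({u, v, w} : Finset V), #{b | 0 < g a b} = 2) : 5 ≤ r := by
  set X : Finset V := {u, v, w} with hX
  have hsplit (p : V → Prop) [DecidablePred p] :
      #{b | p b} = #{b ∈ X | p b} + #{b ∈ Xᶜ | p b} := by
    rw [← card_union_of_disjoint (disjoint_filter_filter disjoint_compl_right), ← filter_union,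
      union_compl]
  have hcardX : #X = 3 := by
    rw [hX, card_insert_of_notMem, card_pair hvw.ne]
    simp [hvu.ne.symm, huw]
  have hinternal : ∑ a ∈ X, #{b ∈ X | G.Adj a b} = 4 := by
    have hnwu : ¬G.Adj w u := fun h => hnuw h.symm
    rw [hX, sum_insert (by simp [hvu.ne.symm, huw]), sum_pair hvw.ne]
    simp [filter_insert, filter_singleton, hvu, hvw, hvu.symm, hvw.symm, hnuw, hnwu,
      card_pair huw]
  have hpos : ∑ a ∈ X, #{b | 0 < g a b} = 6 := by
    rw [sum_congr rfl hout, sum_const, hcardX, smul_eq_mul]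
  have hneg : ∑ a ∈ X, #{b | g a b < 0} = 3 := by
    have := sum_congr rfl fun a (_ : a ∈ X) => hg.card_pos_add_card_neg_eq_three hG a
    rw [sum_add_distrib, hpos, sum_const, hcardX, smul_eq_mul] at this
    omega
  have hX_adj := sum_congr rfl fun a (_ : a ∈ X) => hg.card_pos_add_card_neg a X
  rw [sum_add_distrib, hinternal] at hX_adj
  rw [sum_congr rfl fun a _ => hsplit _, sum_add_distrib] at hpos hneg
  -- each of the two edges inside `X` is outgoing at one end and incoming at the other
  have hbalance := hg.sum_card_pos_eq_sum_card_neg X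
  have hcut := hg.card_cut_pos_le X
  have hout4 : ∑ a ∈ X, #{b ∈ Xᶜ | 0 < g a b} = 4 := by omega
  have hin1 : ∑ a ∈ X, #{b ∈ Xᶜ | g a b < 0} = 1 := by omega
  rw [hout4, hin1] at hcut
  norm_num at hcut
  linarith

end Cubic

end IsNowhereZeroFlow

end SimpleGraph

def arcFlow {V : Type} [DecidableEq V] (l : List (V × V × ℤ)) (a b : V) : ℤ :=
  (l.map fun t => if (t.1, t.2.1) = (a, b) then t.2.2 else 0).sum -
    (l.map fun t => if (t.1, t.2.1) = (b, a) then t.2.2 else 0).sum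

lemma arcFlow_swap {V : Type} [DecidableEq V] (l : List (V × V × ℤ)) (a b : V) :
    arcFlow l b a = -arcFlow l a b :=
  (neg_sub _ _).symm

instance : DecidableRel petersen.Adj := fun a b => inferInstanceAs (Decidable (Disjoint a.1 b.1))

lemma card_petersenVertex : Fintype.card PetersenVertex = 10 := by decide

lemma petersen_isRegularOfDegree_three : petersen.IsRegularOfDegree 3 := fun v => by
  revert v
  decide

lemma petersen_not_adj_of_adj_of_adj :
    ∀ {u v w : PetersenVertex}, petersen.Adj u v → petersen.Adj v w → ¬petersen.Adj u w := by
  decide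

set_option maxRecDepth 100000 in
lemma petersen_exists_two_neighbors_same_side :
    ∀ S : Finset PetersenVertex, #S = 5 → ∃ v, 1 < #{b | petersen.Adj v b ∧ (b ∈ S ↔ v ∈ S)} := by
  decide

def petersenVertex (i j : Fin 5) (h : i ≠ j := by decide) : PetersenVertex := ⟨{i, j}, card_pair h⟩

def petersenFiveFlow : PetersenVertex → PetersenVertex → ℤ := arcFlow
  [(petersenVertex 0 1, petersenVertex 2 4, 4), (petersenVertex 0 2, petersenVertex 1 4, 1),
   (petersenVertex 0 2, petersenVertex 3 4, 3), (petersenVertex 1 2, petersenVertex 0 4, 2),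
   (petersenVertex 0 3, petersenVertex 1 2, 1), (petersenVertex 0 3, petersenVertex 1 4, 2),
   (petersenVertex 1 3, petersenVertex 0 2, 4), (petersenVertex 2 3, petersenVertex 0 1, 2),
   (petersenVertex 2 3, petersenVertex 0 4, 1), (petersenVertex 0 4, petersenVertex 1 3, 3),
   (petersenVertex 1 4, petersenVertex 2 3, 3), (petersenVertex 2 4, petersenVertex 0 3, 3),
   (petersenVertex 2 4, petersenVertex 1 3, 1), (petersenVertex 3 4, petersenVertex 0 1, 2),
   (petersenVertex 3 4, petersenVertex 1 2, 1)]

lemma petersen_isNowhereZeroFlow_five :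
    petersen.IsNowhereZeroFlow 5 fun a b => (petersenFiveFlow a b : ℝ) where
  skew a b := by rw [petersenFiveFlow, arcFlow_swap, Int.cast_neg]
  eq_zero_of_not_adj {a b} h := by
    have : ∀ a b, ¬petersen.Adj a b → petersenFiveFlow a b = 0 := by decide
    rw [this a b h, Int.cast_zero]
  bounds {a b} h := by
    have : ∀ a b, petersen.Adj a b → 1 ≤ |petersenFiveFlow a b| ∧ |petersenFiveFlow a b| ≤ 4 := by
      decide
    obtain ⟨h₁, h₄⟩ := this a b h
    exact ⟨by exact_mod_cast h₁, by norm_num; exact_mod_cast h₄⟩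
  sum_eq_zero a := by
    have : ∀ a, ∑ b, petersenFiveFlow a b = 0 := by decide
    exact_mod_cast this a

lemma five_le_of_petersen_isNowhereZeroFlow {r : ℝ} {g : PetersenVertex → PetersenVertex → ℝ}
    (hg : petersen.IsNowhereZeroFlow r g) : 5 ≤ r := by
  have hG := petersen_isRegularOfDegree_three
  set S : Finset PetersenVertex := {a | #{b | 0 < g a b} = 2}
  have hS : #S = 5 := by
    have : 2 * #S = 10 := card_petersenVertex ▸ hg.two_mul_card_eq_card hG
    omega
  obtain ⟨v, hv⟩ := petersen_exists_two_neighbors_same_side S hS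
  obtain ⟨u, hu, w, hw, huw⟩ := one_lt_card.mp hv
  simp only [mem_filter, mem_univ, true_and] at hu hw
  have hnuw := petersen_not_adj_of_adj_of_adj hu.1.symm hw.1
  have hsame : ∀ a ∈ ({u, v, w} : Finset PetersenVertex), (a ∈ S ↔ v ∈ S) := by
    simp only [mem_insert, mem_singleton, forall_eq_or_imp, forall_eq, iff_self, true_and]
    exact ⟨hu.2, hw.2⟩
  by_cases hvS : v ∈ S
  · refine hg.five_le_of_induced_path hG hu.1 hw.1 huw hnuw fun a ha => ?_
    simpa [S] using (hsame a ha).mpr hvS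
  · refine hg.neg.five_le_of_induced_path hG hu.1 hw.1 huw hnuw fun a ha => ?_
    exact hg.card_pos_neg_eq_two_of_ne hG (by simpa [S] using mt (hsame a ha).mp hvS)

theorem flowNumber_petersen : petersenMultigraph.flowNumber = ((5 : ℝ) : EReal) := by
  have hflow (r : ℝ) :
      petersenMultigraph.HasNowhereZeroFlow r ↔ ∃ g, petersen.IsNowhereZeroFlow r g :=
    petersen.hasNowhereZeroFlow_toMultigraph_iff
  refine le_antisymm
    (sInf_le ⟨5, rfl, (hflow 5).mpr ⟨_, petersen_isNowhereZeroFlow_five⟩⟩) (le_sInf ?_)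
  rintro _ ⟨r, rfl, hr⟩
  obtain ⟨g, hg⟩ := (hflow r).mp hr
  exact EReal.coe_le_coe_iff.mpr (five_le_of_petersen_isNowhereZeroFlow hg)
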